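/- Let G be an atomic weakly-reversible CRN. Then the ideal (E_G) is prime; in fact k[x_1,...,x_s]/(E_G) is isomorphic to the polynomial ring on the atoms of G. -/

import Mathlib

open MvPolynomial Relation

/-- A chemical reaction network on `s` species: a finite directed graph whose
vertices are labeled by distinct monomials (exponent vectors). -/
structure CRN (s : ℕ) where
  n : ℕ
  edge : Fin n → Fin n → Prop
  ψ : Fin n → (Fin s → ℕ)
  inj : Function.Injective ψ

variable {s : ℕ}

/-- Weak reversibility: every connected component of the reaction graph is
strongly connected, i.e. undirected reachability implies directed reachability. -/
def CRN.weaklyReversible (G : CRN s) : Prop :=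
  ∀ i j, Relation.ReflTransGen (fun a b => G.edge a b ∨ G.edge b a) i j →
    Relation.ReflTransGen G.edge i j

/-- Directed edge of the event-graph: `(N·ψ i, N·ψ j)` for an edge `(i,j)` of `G`
and a monic monomial `N` (exponent vector `c`). -/
def CRN.eventEdge (G : CRN s) (M N : Fin s → ℕ) : Prop :=
  ∃ i j c, G.edge i j ∧ M = c + G.ψ i ∧ N = c + G.ψ j

/-- Directed reachability in the event-graph. -/
def CRN.eventReach (G : CRN s) (M N : Fin s → ℕ) : Prop :=
  Relation.ReflTransGen G.eventEdge M N

/-- Path-connectedness (in the undirected sense) in the event-graph. -/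
def CRN.connected (G : CRN s) (M N : Fin s → ℕ) : Prop :=
  Relation.ReflTransGen (fun a b => G.eventEdge a b ∨ G.eventEdge b a) M N

/-- gcd of two monomials, as exponent vectors. -/
def mgcd (M N : Fin s → ℕ) : Fin s → ℕ := fun i => min (M i) (N i)

/-- A weakly-reversible CRN is catalytic iff some path-connected monomials `M, N`
in the event-graph become disconnected after dividing by their gcd. -/
def CRN.catalytic (G : CRN s) : Prop :=
  ∃ M N : Fin s → ℕ, G.connected M N ∧
    ¬ G.connected (M - mgcd M N) (N - mgcd M N)

/-- The monic monomial with exponent vector `e`, as a polynomial. -/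
noncomputable def mon (k : Type*) [CommSemiring k] (e : Fin s → ℕ) :
    MvPolynomial (Fin s) k :=
  MvPolynomial.monomial (Finsupp.equivFunOnFinite.symm e) 1

/-- The set of binomials of the associated event-system `E_G` (one binomial for
each edge of the underlying undirected graph of `G`). -/
def CRN.eventSystem (G : CRN s) (k : Type*) [CommRing k] :
    Set (MvPolynomial (Fin s) k) :=
  {p | ∃ i j, (G.edge i j ∨ G.edge j i) ∧ p = mon k (G.ψ i) - mon k (G.ψ j)}

/-- The ideal `(E_G)` generated by the associated event-system. -/
noncomputable def CRN.eventIdeal (G : CRN s) (k : Type*) [CommRing k] :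
    Ideal (MvPolynomial (Fin s) k) :=
  Ideal.span (G.eventSystem k)

/-- The stoichiometric subspace of `G`. -/
def CRN.stoich (G : CRN s) : Submodule ℝ (Fin s → ℝ) :=
  Submodule.span ℝ
    {v | ∃ i j, G.edge i j ∧ v = fun t => (G.ψ j t : ℝ) - (G.ψ i t : ℝ)}

/-- `Z` is a siphon of `G`. -/
def CRN.siphon (G : CRN s) (Z : Set (Fin s)) : Prop :=
  Z.Nonempty ∧ ∀ i j, G.edge i j →
    (∃ l ∈ Z, G.ψ j l ≠ 0) → (∃ l ∈ Z, G.ψ i l ≠ 0)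

/-- `Z` is a critical siphon of `G`: a siphon whose zero pattern is realized by a
nonnegative point whose invariant polyhedron meets the positive orthant. -/
def CRN.criticalSiphon (G : CRN s) (Z : Set (Fin s)) : Prop :=
  G.siphon Z ∧ ∃ z : Fin s → ℝ, (∀ i, 0 ≤ z i) ∧ Z = {i | z i = 0} ∧
    ∃ p : Fin s → ℝ, (∀ i, 0 < p i) ∧ p - z ∈ G.stoich

/-- The underlying undirected CRN (every reaction made reversible). -/
def CRN.sym (G : CRN s) : CRN s :=
  ⟨G.n, fun i j => G.edge i j ∨ G.edge j i, G.ψ, G.inj⟩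

/-- A point `a` is a zero of all binomials in the event-system of `G`. -/
def CRN.vanishesAt (G : CRN s) {k : Type*} [CommRing k] (a : Fin s → k) : Prop :=
  ∀ i j, G.edge i j → ∏ t, a t ^ G.ψ i t = ∏ t, a t ^ G.ψ j t

/-- The saturation `I : f^∞`, as a set. -/
def satSet {R : Type*} [CommRing R] (I : Ideal R) (f : R) : Set R :=
  {g | ∃ m : ℕ, 0 < m ∧ f ^ m * g ∈ I}


/-- `x_i` is an atom of `G`: the monomial `x_i` is an isolated node of the
event-graph. -/
def CRN.isAtomSpecies {s : ℕ} (G : CRN s) (i : Fin s) : Prop :=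
  ∀ M : Fin s → ℕ, ¬ G.eventEdge (Pi.single i 1) M ∧ ¬ G.eventEdge M (Pi.single i 1)

/-- An atomic monomial: all its variables are atoms. -/
def CRN.atomicMon {s : ℕ} (G : CRN s) (M : Fin s → ℕ) : Prop :=
  ∀ j, M j ≠ 0 → G.isAtomSpecies j

/-- `G` is atomic: every connected component of the event-graph contains
exactly one atomic monomial. -/
def CRN.atomic {s : ℕ} (G : CRN s) : Prop :=
  ∀ M : Fin s → ℕ, ∃! A : Fin s → ℕ, G.atomicMon A ∧ G.connected M A

/-!
Connectivity in the event-graph is invariant under translation by a monomial and sums of atomic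
monomials are atomic, so the decomposition map, sending `M` to the unique atomic monomial
connected to it, is additive. It therefore induces a `k`-algebra map `φ` from `k[x]` to the
polynomial ring on the atoms. It kills `E_G`, because the two complexes of a reaction are
connected, and it fixes the atoms, so the inclusion `ι` of the atom ring is a section of `φ`.
Conversely every monomial is congruent modulo `(E_G)` to its atomic representative (walk along a
connecting path), so `ι ∘ φ ≡ id` modulo `(E_G)`, whence `ker φ = (E_G)`. The quotient is then a
polynomial ring over a field, hence a domain.
-/

theorem MvPolynomial.rename_killCompl_monomial {σ τ R : Type*} [CommSemiring R] {f : σ → τ}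
    (hf : Function.Injective f) {d : τ →₀ ℕ} (hd : ↑d.support ⊆ Set.range f) (c : R) :
    rename f (killCompl hf (monomial d c)) = monomial d c := by
  rw [killCompl_monomial_eq_monomial_comapDomain_of_subset hf c hd, rename_monomial,
    Finsupp.mapDomain_comapDomain f hf d hd]

theorem RingHom.ker_eq_of_le_of_mk_comp {A B : Type*} [CommRing A] [CommRing B] {I : Ideal A}
    (φ : A →+* B) (ι : B →+* A) (hI : I ≤ RingHom.ker φ)
    (h : ∀ a, Ideal.Quotient.mk I (ι (φ a)) = Ideal.Quotient.mk I a) : RingHom.ker φ = I :=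
  le_antisymm (fun a ha => Ideal.Quotient.eq_zero_iff_mem.mp <| by
    rw [← h a, RingHom.mem_ker.mp ha, map_zero, map_zero]) hI

theorem mon_add (k : Type*) [CommSemiring k] (A B : Fin s → ℕ) :
    mon k (A + B) = mon k A * mon k B := by
  rw [mon, mon, mon, monomial_mul, one_mul]
  congr 2
  ext
  simp

theorem mon_single (k : Type*) [CommSemiring k] (i : Fin s) : mon k (Pi.single i 1) = X i := by
  classical
  simp [mon, X, Finsupp.equivFunOnFinite_symm_single]

namespace CRN

theorem eventEdge.add_right {G : CRN s} {M N : Fin s → ℕ} (h : G.eventEdge M N)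
    (c : Fin s → ℕ) : G.eventEdge (M + c) (N + c) := by
  obtain ⟨i, j, e, hij, rfl, rfl⟩ := h
  exact ⟨i, j, e + c, hij, add_right_comm .., add_right_comm ..⟩

theorem connected.add_right {G : CRN s} {M N : Fin s → ℕ} (h : G.connected M N)
    (c : Fin s → ℕ) : G.connected (M + c) (N + c) :=
  h.lift (· + c) fun _ _ => Or.imp (·.add_right c) (·.add_right c)

theorem connected.add {G : CRN s} {M M' N N' : Fin s → ℕ} (hM : G.connected M M')
    (hN : G.connected N N') : G.connected (M + N) (M' + N') :=
  (hM.add_right N).trans (by rw [add_comm M', add_comm M']; exact hN.add_right M')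

theorem connected_of_edge (G : CRN s) {i j : Fin G.n} (h : G.edge i j ∨ G.edge j i) :
    G.connected (G.ψ i) (G.ψ j) := by
  refine .single (h.imp (fun h => ⟨i, j, 0, h, ?_, ?_⟩) fun h => ⟨j, i, 0, h, ?_, ?_⟩) <;>
    rw [zero_add]

section EventIdeal

variable (G : CRN s) (k : Type*) [CommRing k]

theorem mk_mon_eq_of_eventEdge {M N : Fin s → ℕ} (h : G.eventEdge M N) :
    Ideal.Quotient.mk (G.eventIdeal k) (mon k M) =
      Ideal.Quotient.mk (G.eventIdeal k) (mon k N) := by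
  obtain ⟨i, j, c, hij, rfl, rfl⟩ := h
  have hgen : Ideal.Quotient.mk (G.eventIdeal k) (mon k (G.ψ i))
      = Ideal.Quotient.mk (G.eventIdeal k) (mon k (G.ψ j)) :=
    Ideal.Quotient.eq.mpr (Ideal.subset_span ⟨i, j, .inl hij, rfl⟩)
  simp only [mon_add, map_mul, hgen]

variable {G} in
theorem connected.mk_mon_eq {M N : Fin s → ℕ} (h : G.connected M N) :
    Ideal.Quotient.mk (G.eventIdeal k) (mon k M) =
      Ideal.Quotient.mk (G.eventIdeal k) (mon k N) := by
  induction h with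
  | refl => rfl
  | tail _ step ih =>
    exact ih.trans <| step.elim (G.mk_mon_eq_of_eventEdge k) fun h =>
      (G.mk_mon_eq_of_eventEdge k h).symm

end EventIdeal

theorem atomicMon_zero (G : CRN s) : G.atomicMon 0 := fun _ h => (h rfl).elim

theorem atomicMon.add {G : CRN s} {A B : Fin s → ℕ} (hA : G.atomicMon A) (hB : G.atomicMon B) :
    G.atomicMon (A + B) := fun j hj =>
  (not_and_or.mp fun h => hj (by simp [h.1, h.2])).elim (hA j) (hB j)

theorem atomicMon_single {G : CRN s} {j : Fin s} (hj : G.isAtomSpecies j) :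
    G.atomicMon (Pi.single j 1) := fun t ht => by
  obtain rfl : t = j := by by_contra h; simp [h] at ht
  exact hj

abbrev Atom (G : CRN s) : Type := {i : Fin s // G.isAtomSpecies i}

theorem atomicMon.rename_killCompl_mon {G : CRN s} {A : Fin s → ℕ} (hA : G.atomicMon A)
    (k : Type*) [CommSemiring k] :
    rename (Subtype.val : G.Atom → Fin s) (killCompl Subtype.val_injective (mon k A)) = mon k A :=
  rename_killCompl_monomial _ (fun t ht => ⟨⟨t, hA t (by simpa using ht)⟩, rfl⟩) 1

section Decompose

variable {G : CRN s} (hat : G.atomic)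

noncomputable def decompose : (Fin s → ℕ) →+ (Fin s → ℕ) where
  toFun M := (hat M).choose
  map_zero' := ((hat 0).choose_spec.2 0 ⟨G.atomicMon_zero, .refl⟩).symm
  map_add' M N := ((hat (M + N)).choose_spec.2 _
    ⟨(hat M).choose_spec.1.1.add (hat N).choose_spec.1.1,
      (hat M).choose_spec.1.2.add (hat N).choose_spec.1.2⟩).symm

theorem atomicMon_decompose (M : Fin s → ℕ) : G.atomicMon (decompose hat M) :=
  (hat M).choose_spec.1.1

theorem connected_decompose (M : Fin s → ℕ) : G.connected M (decompose hat M) :=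
  (hat M).choose_spec.1.2

theorem decompose_eq_of_connected {M A : Fin s → ℕ} (hA : G.atomicMon A)
    (h : G.connected M A) : decompose hat M = A :=
  ((hat M).choose_spec.2 A ⟨hA, h⟩).symm

theorem decompose_of_atomicMon {A : Fin s → ℕ} (hA : G.atomicMon A) : decompose hat A = A :=
  decompose_eq_of_connected hat hA .refl

theorem connected.decompose_eq {M N : Fin s → ℕ} (h : G.connected M N) :
    decompose hat M = decompose hat N :=
  decompose_eq_of_connected hat (atomicMon_decompose hat N)
    (h.trans (connected_decompose hat N))

variable (k : Type*) [CommRing k]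

noncomputable def decomposePoly : MvPolynomial (Fin s) k →ₐ[k] MvPolynomial (Fin s) k :=
  AddMonoidAlgebra.mapDomainAlgHom k k <|
    (Finsupp.linearEquivFunOnFinite ℕ ℕ (Fin s)).symm.toAddMonoidHom.comp <|
      (decompose hat).comp (Finsupp.linearEquivFunOnFinite ℕ ℕ (Fin s)).toAddMonoidHom

theorem decomposePoly_mon (M : Fin s → ℕ) :
    decomposePoly hat k (mon k M) = mon k (decompose hat M) :=
  AddMonoidAlgebra.mapDomain_single

noncomputable def toAtoms : MvPolynomial (Fin s) k →ₐ[k] MvPolynomial G.Atom k :=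
  (killCompl Subtype.val_injective).comp (decomposePoly hat k)

theorem decomposePoly_comp_rename :
    (decomposePoly hat k).comp (rename Subtype.val) =
      rename (R := k) (Subtype.val : G.Atom → Fin s) :=
  algHom_ext fun j => by
    rw [AlgHom.comp_apply, rename_X, ← mon_single, decomposePoly_mon,
      decompose_of_atomicMon hat (atomicMon_single j.2)]

theorem rename_comp_toAtoms : (rename Subtype.val).comp (toAtoms hat k) = decomposePoly hat k :=
  algHom_ext fun i => by
    rw [toAtoms, AlgHom.comp_apply, AlgHom.comp_apply, ← mon_single, decomposePoly_mon]
    exact (atomicMon_decompose hat _).rename_killCompl_mon k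

theorem toAtoms_comp_rename : (toAtoms hat k).comp (rename Subtype.val) = AlgHom.id k _ := by
  rw [toAtoms, AlgHom.comp_assoc, decomposePoly_comp_rename, killCompl_comp_rename]

theorem toAtoms_surjective : Function.Surjective (toAtoms hat k) :=
  fun q => ⟨rename Subtype.val q, AlgHom.congr_fun (toAtoms_comp_rename hat k) q⟩

theorem eventIdeal_le_ker_toAtoms : G.eventIdeal k ≤ RingHom.ker (toAtoms hat k) := by
  refine Ideal.span_le.mpr ?_
  rintro _ ⟨i, j, hij, rfl⟩
  simp only [SetLike.mem_coe, RingHom.mem_ker, toAtoms, AlgHom.comp_apply, map_sub,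
    decomposePoly_mon, (G.connected_of_edge hij).decompose_eq hat, sub_self]

theorem mk_decomposePoly (p : MvPolynomial (Fin s) k) :
    Ideal.Quotient.mk (G.eventIdeal k) (decomposePoly hat k p) = Ideal.Quotient.mk _ p := by
  suffices (Ideal.Quotient.mkₐ k (G.eventIdeal k)).comp (decomposePoly hat k) =
      Ideal.Quotient.mkₐ k (G.eventIdeal k) from AlgHom.congr_fun this p
  refine algHom_ext fun i => ?_
  rw [AlgHom.comp_apply, ← mon_single, decomposePoly_mon, Ideal.Quotient.mkₐ_eq_mk]
  exact ((connected_decompose hat _).mk_mon_eq k).symm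

theorem ker_toAtoms : RingHom.ker (toAtoms hat k) = G.eventIdeal k :=
  RingHom.ker_eq_of_le_of_mk_comp _ (rename Subtype.val).toRingHom
    (eventIdeal_le_ker_toAtoms hat k) fun p => by
      rw [← mk_decomposePoly hat k p, ← rename_comp_toAtoms hat k]
      rfl

end Decompose

end CRN

theorem atomic_eventIdeal_prime_general {k : Type*} [Field k] {s : ℕ}
    (G : CRN s) (hat : G.atomic) :
    (G.eventIdeal k).IsPrime ∧
    Nonempty ((MvPolynomial (Fin s) k ⧸ G.eventIdeal k) ≃+*
      MvPolynomial {i : Fin s // G.isAtomSpecies i} k) := by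
  have hker := CRN.ker_toAtoms hat k
  refine ⟨hker ▸ RingHom.ker_isPrime _, ⟨(Ideal.quotEquivOfEq hker.symm).trans ?_⟩⟩
  exact RingHom.quotientKerEquivOfSurjective (CRN.toAtoms_surjective hat k)

/-- If `G` is atomic then `(E_G)` is prime; indeed the quotient is isomorphic to
the polynomial ring on the atoms of `G`. -/
theorem atomic_eventIdeal_prime {k : Type*} [Field k] [CharZero k] {s : ℕ}
    (G : CRN s) (hwr : G.weaklyReversible) (hat : G.atomic) :
    (G.eventIdeal k).IsPrime ∧
    Nonempty ((MvPolynomial (Fin s) k ⧸ G.eventIdeal k) ≃+*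
      MvPolynomial {i : Fin s // G.isAtomSpecies i} k) :=
  atomic_eventIdeal_prime_general G hat
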